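/- arXiv:math/9907119 — 2 statements merged into one kernel-verified Lean document; each statement's English description precedes it below -/
import Mathlib

section
/- For every n ≥ 3, the tensor product K_n ⊗ K_n is not a circulant graph. -/
open SimpleGraph

/-- A graph is circulant iff its automorphism group contains a transitive cyclic subgroup,
i.e. some automorphism whose iterates act transitively on the vertices. -/
def SimpleGraph.IsCirculant {V : Type*} (G : SimpleGraph V) : Prop :=
  ∃ φ : G ≃g G, ∀ v w : V, ∃ k : ℕ, (φ.toEquiv ^ k) v = w

/-- The tensor (categorical/Kronecker) product of simple graphs. -/
def SimpleGraph.tensor {α β : Type*} (G : SimpleGraph α) (H : SimpleGraph β) :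
    SimpleGraph (α × β) where
  Adj x y := G.Adj x.1 y.1 ∧ H.Adj x.2 y.2
  symm.symm _ _ h := ⟨G.adj_symm h.1, H.adj_symm h.2⟩
  loopless.irrefl x h := G.loopless.irrefl x.1 h.1

/-! An automorphism of `Kₙ ⊗ Kₙ` is an automorphism of the complementary rook's graph, in which
two cells are adjacent when they share a row or a column; so it permutes rows and columns and has
the form `(x, y) ↦ (a x, b y)` or `(x, y) ↦ (a y, b x)`. If the first kind were transitive, `a` and
`b` would be `n`-cycles and its orbits would have at most `n < n²` points. For the second kind, the
graph of `b` together with its image is an invariant set of at most `2n < n²` points. -/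

namespace Function

variable {α : Type*} {g : α → α}

theorem isPeriodicPt_of_forall_exists_iterate_eq (hg : ∀ v w : α, ∃ k, g^[k] v = w) (x : α) :
    x ∈ periodicPts g := by
  obtain ⟨k, hk⟩ := hg (g x) x
  exact mk_mem_periodicPts k.succ_pos (by rwa [IsPeriodicPt, IsFixedPt, iterate_succ_apply])

theorem card_le_of_isPeriodicPt {x : α} (hx : ∀ y, ∃ k, g^[k] x = y) {d : ℕ} (hd : 0 < d)
    (hdx : IsPeriodicPt g d x) : Nat.card α ≤ d := by
  have hsurj : Surjective fun k : Fin d => g^[k] x := fun y => by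
    obtain ⟨k, rfl⟩ := hx y
    exact ⟨⟨k % d, Nat.mod_lt k hd⟩, hdx.iterate_mod_apply k⟩
  simpa using Nat.card_le_card_of_surjective _ hsurj

theorem minimalPeriod_eq_card [Finite α] (hg : ∀ v w : α, ∃ k, g^[k] v = w) (x : α) :
    minimalPeriod g x = Nat.card α := by
  have hx := isPeriodicPt_of_forall_exists_iterate_eq hg x
  refine le_antisymm ?_ (card_le_of_isPeriodicPt (hg x)
    (minimalPeriod_pos_of_mem_periodicPts hx) (isPeriodicPt_minimalPeriod g x))
  simpa using Nat.card_le_card_of_injective (fun k : Fin (minimalPeriod g x) => g^[k] x)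
    fun i j hij => Fin.ext (iterate_injOn_Iio_minimalPeriod i.2 j.2 hij)

theorem iterate_card_apply [Finite α] (hg : ∀ v w : α, ∃ k, g^[k] v = w) (x : α) :
    g^[Nat.card α] x = x := by
  rw [← minimalPeriod_eq_card hg x, iterate_minimalPeriod]

theorem eq_univ_of_mapsTo (hg : ∀ v w : α, ∃ k, g^[k] v = w) {s : Set α}
    (hs : Set.MapsTo g s s) {x : α} (hx : x ∈ s) : s = Set.univ :=
  Set.eq_univ_of_forall fun y => by
    obtain ⟨k, rfl⟩ := hg x y
    exact hs.iterate k hx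

theorem card_le_one_of_prodMap [Finite α] {a b : α → α}
    (h : ∀ v w : α × α, ∃ k, (Prod.map a b)^[k] v = w) : Nat.card α ≤ 1 := by
  rcases isEmpty_or_nonempty α with hα | hα
  · simp
  obtain ⟨x⟩ := id hα
  have ha : ∀ u w : α, ∃ k, a^[k] u = w := fun u w => (h (u, x) (w, x)).imp fun k hk => by
    simpa only [Prod.map_iterate, Prod.map_fst, Prod.map_snd] using congrArg Prod.fst hk
  have hb : ∀ u w : α, ∃ k, b^[k] u = w := fun u w => (h (x, u) (x, w)).imp fun k hk => by
    simpa only [Prod.map_iterate, Prod.map_fst, Prod.map_snd] using congrArg Prod.snd hk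
  have hx : IsPeriodicPt (Prod.map a b) (Nat.card α) (x, x) := by
    simp only [IsPeriodicPt, IsFixedPt, Prod.map_iterate, Prod.map_apply,
      iterate_card_apply ha, iterate_card_apply hb]
  have := card_le_of_isPeriodicPt (h (x, x)) Nat.card_pos hx
  rw [Nat.card_prod] at this
  nlinarith [Nat.card_pos (α := α)]

theorem card_le_two_of_prodMap_comp_swap [Finite α] {a b : α → α}
    (h : ∀ v w : α × α, ∃ k, (Prod.map a b ∘ Prod.swap)^[k] v = w) : Nat.card α ≤ 2 := by
  rcases isEmpty_or_nonempty α with hα | ⟨⟨x⟩⟩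
  · simp
  set e : α ⊕ α → α × α := Sum.elim (fun x => (x, b x)) (fun x => (a (b x), b x))
  have hs : Set.MapsTo (Prod.map a b ∘ Prod.swap) (Set.range e) (Set.range e) := by
    rintro _ ⟨x | x, rfl⟩
    exacts [⟨.inr x, rfl⟩, ⟨.inl (a (b x)), rfl⟩]
  have he : Surjective e := Set.range_eq_univ.1 (eq_univ_of_mapsTo h hs ⟨.inl x, rfl⟩)
  have := Nat.card_le_card_of_surjective e he
  rw [Nat.card_prod, Nat.card_sum] at this
  nlinarith

end Function

namespace SimpleGraph

variable {α β : Type*}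

theorem tensor_adj {G : SimpleGraph α} {H : SimpleGraph β} {p q : α × β} :
    (G.tensor H).Adj p q ↔ G.Adj p.1 q.1 ∧ H.Adj p.2 q.2 := Iff.rfl

def tensorComm (G : SimpleGraph α) (H : SimpleGraph β) : G.tensor H ≃g H.tensor G where
  toEquiv := Equiv.prodComm α β
  map_rel_iff' := and_comm

theorem not_top_tensor_top_adj {p q : α × β} :
    ¬((⊤ : SimpleGraph α).tensor (⊤ : SimpleGraph β)).Adj p q ↔ p.1 = q.1 ∨ p.2 = q.2 := by
  simp only [tensor_adj, top_adj]
  tauto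

namespace Iso

variable
  (φ : (completeGraph α).tensor (completeGraph α) ≃g (completeGraph α).tensor (completeGraph α))

theorem aligned_apply_iff (p q : α × α) :
    (φ p).1 = (φ q).1 ∨ (φ p).2 = (φ q).2 ↔ p.1 = q.1 ∨ p.2 = q.2 := by
  simpa only [not_top_tensor_top_adj] using φ.map_adj_iff.not

section RowToRow

variable {φ} {z o : α} (hzo : z ≠ o) (hrow : (φ (z, z)).1 = (φ (z, o)).1)
include hzo hrow

theorem fst_apply_row_eq (y : α) : (φ (z, y)).1 = (φ (z, z)).1 := by
  by_contra hy
  have hz := ((aligned_apply_iff φ (z, y) (z, z)).2 (.inl rfl)).resolve_left hy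
  have ho := ((aligned_apply_iff φ (z, y) (z, o)).2 (.inl rfl)).resolve_left (hrow ▸ hy)
  exact hzo (congrArg Prod.snd (φ.injective (Prod.ext hrow (hz.symm.trans ho))))

theorem snd_apply_row_injective : Function.Injective fun y => (φ (z, y)).2 := fun y y' h =>
  congrArg Prod.snd <| φ.injective <| Prod.ext
    ((fst_apply_row_eq hzo hrow y).trans (fst_apply_row_eq hzo hrow y').symm) h

variable [Finite α]

theorem exists_row_apply_eq {w : α × α} (hw : w.1 = (φ (z, z)).1) : ∃ y, φ (z, y) = w := by
  obtain ⟨y, hy⟩ := Finite.surjective_of_injective (snd_apply_row_injective hzo hrow) w.2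
  exact ⟨y, Prod.ext ((fst_apply_row_eq hzo hrow y).trans hw.symm) hy⟩

theorem snd_apply_eq_snd_apply_row (x c : α) : (φ (x, c)).2 = (φ (z, c)).2 := by
  rcases eq_or_ne x z with rfl | hx
  · rfl
  refine ((aligned_apply_iff φ (x, c) (z, c)).2 (.inr rfl)).resolve_left fun h => ?_
  obtain ⟨y, hy⟩ := exists_row_apply_eq hzo hrow (h.trans (fst_apply_row_eq hzo hrow c))
  exact hx (congrArg Prod.fst (φ.injective hy)).symm

theorem fst_apply_eq_fst_apply_col (r y : α) : (φ (r, y)).1 = (φ (r, z)).1 := by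
  rcases eq_or_ne y z with rfl | hy
  · rfl
  refine ((aligned_apply_iff φ (r, y) (r, z)).2 (.inl rfl)).resolve_right fun h => ?_
  exact hy <| snd_apply_row_injective hzo hrow <| by
    simpa only [snd_apply_eq_snd_apply_row hzo hrow r] using h

theorem eq_prodMap_of_fst_apply_eq :
    ⇑φ = Prod.map (fun r => (φ (r, z)).1) (fun c => (φ (z, c)).2) :=
  funext fun p => Prod.ext (fst_apply_eq_fst_apply_col hzo hrow p.1 p.2)
    (snd_apply_eq_snd_apply_row hzo hrow p.1 p.2)

end RowToRow

theorem exists_eq_prodMap_or_eq_prodMap_comp_swap [Finite α] [Nontrivial α] :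
    ∃ a b : α → α, ⇑φ = Prod.map a b ∨ ⇑φ = Prod.map a b ∘ Prod.swap := by
  obtain ⟨z, o, hzo⟩ := exists_pair_ne α
  by_cases hrow : (φ (z, z)).1 = (φ (z, o)).1
  · exact ⟨_, _, .inl (eq_prodMap_of_fst_apply_eq hzo hrow)⟩
  have hcol : (φ (z, z)).2 = (φ (z, o)).2 :=
    ((aligned_apply_iff φ (z, z) (z, o)).2 (.inl rfl)).resolve_left hrow
  have hswap := eq_prodMap_of_fst_apply_eq (φ := φ.trans (tensorComm _ _)) hzo hcol
  exact ⟨_, _, .inr ((congrArg (Prod.swap ∘ ·) hswap).trans (Prod.map_comp_swap _ _).symm)⟩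

end Iso

end SimpleGraph

theorem stmt_8 (n : ℕ) (hn : 3 ≤ n) :
    ¬ ((completeGraph (Fin n)).tensor (completeGraph (Fin n))).IsCirculant := by
  rintro ⟨φ, hφ⟩
  have : Nontrivial (Fin n) := Fin.nontrivial_iff_two_le.2 (by omega)
  have hφ' : ∀ v w, ∃ k, (⇑φ)^[k] v = w := by
    simpa only [Equiv.Perm.coe_pow, RelIso.coe_fn_toEquiv] using hφ
  obtain ⟨a, b, hab | hab⟩ := Iso.exists_eq_prodMap_or_eq_prodMap_comp_swap φ
  · have := Function.card_le_one_of_prodMap (hab ▸ hφ')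
    simp only [Nat.card_eq_fintype_card, Fintype.card_fin] at this
    omega
  · have := Function.card_le_two_of_prodMap_comp_swap (hab ▸ hφ')
    simp only [Nat.card_eq_fintype_card, Fintype.card_fin] at this
    omega
end

section
/- Let G be a connected bipartite graph that is regular of odd degree, and let H be a connected non-bipartite graph that is regular of odd degree. Then G ⊗ H is not circulant. -/
open SimpleGraph

/-!
If the iterates of `φ` act transitively on the `N` vertices, the cyclic group `⟨φ⟩` acts
regularly, so `ψ v ↦ ψ⁻¹ v` is an involution of the neighbourhood of a vertex `v`. In `G ⊗ H` that
neighbourhood has odd size `d₁ d₂`, so some neighbour is `ψ v` with `ψ² = 1`; as `4 ∣ N = |α| |β|`,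
this `ψ` is a square in the cyclic group of order `N`. But `G ⊗ H` is bipartite, and connected
because `H` has closed walks of odd length, and then the square `χ²` of an automorphism never maps
a vertex to a neighbour: a walk `v → χ v` followed by its image under `χ` has even length.
-/

theorem Function.Involutive.exists_eq_self_of_odd_card {X : Type*} [Finite X] {f : X → X}
    (hf : Function.Involutive f) (hX : Odd (Nat.card X)) : ∃ x, f x = x := by
  classical
  have := Fintype.ofFinite X
  refine Equiv.Perm.exists_fixed_point_of_prime (p := 2) (n := 1) ?_ (σ := hf.toPerm f) ?_
  · rwa [← Nat.card_eq_fintype_card, ← even_iff_two_dvd, Nat.not_even_iff_odd]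
  · ext x
    simp [sq, hf x]

theorem isSquare_of_sq_eq_one_of_mem_zpowers {G : Type*} [Group G] {g a : G}
    (h4 : 4 ∣ orderOf g) (ha : a ∈ Subgroup.zpowers g) (ha2 : a ^ 2 = 1) : IsSquare a := by
  obtain ⟨k, rfl⟩ := Subgroup.mem_zpowers_iff.mp ha
  rw [← zpow_natCast, ← zpow_mul, ← orderOf_dvd_iff_zpow_eq_one] at ha2
  obtain ⟨j, rfl⟩ : (2 : ℤ) ∣ k := by
    have := (Int.natCast_dvd_natCast.mpr h4).trans ha2
    omega
  exact ⟨g ^ j, by rw [← zpow_add, two_mul]⟩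

section CyclicAction

variable {A X : Type*} [Group A] [MulAction A X] [FaithfulSMul A X] {g : A} {x : X}

theorem eq_of_smul_eq_of_mem_zpowers (htrans : ∀ y : X, ∃ k : ℤ, g ^ k • x = y) {a b : A}
    (ha : a ∈ Subgroup.zpowers g) (hb : b ∈ Subgroup.zpowers g) (h : a • x = b • x) : a = b := by
  obtain ⟨m, rfl⟩ := Subgroup.mem_zpowers_iff.mp ha
  obtain ⟨n, rfl⟩ := Subgroup.mem_zpowers_iff.mp hb
  refine eq_of_smul_eq_smul (α := X) fun y => ?_
  obtain ⟨k, rfl⟩ := htrans y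
  simp only [smul_smul, ← zpow_add, add_comm _ k]
  rw [zpow_add, zpow_add, mul_smul, mul_smul, h]

theorem bijective_smul_zpowers (htrans : ∀ y : X, ∃ k : ℤ, g ^ k • x = y) :
    Function.Bijective fun a : Subgroup.zpowers g => (a : A) • x := by
  refine ⟨fun a b h => Subtype.ext (eq_of_smul_eq_of_mem_zpowers htrans a.2 b.2 h), fun y => ?_⟩
  obtain ⟨k, rfl⟩ := htrans y
  exact ⟨⟨g ^ k, Subgroup.zpow_mem_zpowers g k⟩, rfl⟩

theorem natCard_eq_orderOf (htrans : ∀ y : X, ∃ k : ℤ, g ^ k • x = y) : Nat.card X = orderOf g := by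
  rw [← Nat.card_zpowers, Nat.card_eq_of_bijective _ (bijective_smul_zpowers htrans)]

end CyclicAction

theorem RelIso.toEquiv_pow_apply {α : Type*} {r : α → α → Prop} (e : r ≃r r) (n : ℕ) (a : α) :
    (e.toEquiv ^ n) a = (e ^ n) a := by
  induction n generalizing a with
  | zero => rfl
  | succ n ih => rw [pow_succ, pow_succ, Equiv.Perm.mul_apply, RelIso.mul_apply, ← ih]; rfl

namespace SimpleGraph

variable {V α β : Type*}

theorem IsRegularOfDegree.even_card_of_odd [Fintype V] {K : SimpleGraph V} [DecidableRel K.Adj]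
    {d : ℕ} (hK : K.IsRegularOfDegree d) (hd : Odd d) : Even (Fintype.card V) := by
  have := K.even_card_odd_degree_vertices
  rwa [Finset.filter_true_of_mem fun v _ => hK v ▸ hd, Finset.card_univ] at this

theorem Connected.not_adj_apply_of_isSquare {K : SimpleGraph V} (hK : K.Connected)
    (hbip : K.Colorable 2) {ψ : K ≃g K} (hψ : IsSquare ψ) (v : V) : ¬ K.Adj v (ψ v) := by
  obtain ⟨χ, rfl⟩ := hψ
  obtain ⟨c⟩ := hbip
  let c' := K.recolorOfEquiv finTwoEquiv c
  obtain ⟨p⟩ := hK.preconnected v (χ v)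
  have heven : Even (p.append (p.map χ.toHom)).length := by
    simp [Walk.length_append, Walk.length_map]
  intro hadj
  exact c'.valid hadj (Bool.eq_iff_iff.mpr ((c'.even_length_iff_congr _).mp heven))

theorem exists_sq_eq_one_adj_of_odd_degree {K : SimpleGraph V} {φ : K ≃g K} {v : V}
    [Fintype (K.neighborSet v)] (htrans : ∀ w, ∃ k : ℤ, (φ ^ k) v = w)
    (hodd : Odd (K.degree v)) : ∃ ψ ∈ Subgroup.zpowers φ, ψ ^ 2 = 1 ∧ K.Adj v (ψ v) := by
  let S := {ψ : Subgroup.zpowers φ // K.Adj v ((ψ : K ≃g K) v)}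
  have e : S ≃ K.neighborSet v :=
    (Equiv.ofBijective _ (bijective_smul_zpowers htrans)).subtypeEquiv fun _ => Iff.rfl
  have : Finite S := .of_equiv _ e.symm
  have hS : Odd (Nat.card S) := by
    rwa [Nat.card_congr e, Nat.card_eq_fintype_card, card_neighborSet_eq_degree]
  let σ : S → S := fun ψ => ⟨ψ.1⁻¹, by
    simpa using (K.adj_symm ((ψ.1⁻¹ : K ≃g K).map_adj_iff.mpr ψ.2))⟩
  obtain ⟨⟨ψ, hadj⟩, hψ⟩ :=
    Function.Involutive.exists_eq_self_of_odd_card (f := σ) (fun ψ => Subtype.ext (inv_inv _)) hS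
  refine ⟨ψ, ψ.2, ?_, hadj⟩
  rw [sq, mul_eq_one_iff_inv_eq]
  exact congrArg (fun ψ : S => (ψ.1 : K ≃g K)) hψ

@[simp] theorem tensor_adj_s19 {G : SimpleGraph α} {H : SimpleGraph β} {x y : α × β} :
    (G.tensor H).Adj x y ↔ G.Adj x.1 y.1 ∧ H.Adj x.2 y.2 := Iff.rfl

instance {G : SimpleGraph α} {H : SimpleGraph β} [DecidableRel G.Adj] [DecidableRel H.Adj] :
    DecidableRel (G.tensor H).Adj :=
  fun _ _ => inferInstanceAs (Decidable (_ ∧ _))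

theorem neighborFinset_tensor [Fintype α] [Fintype β] {G : SimpleGraph α} {H : SimpleGraph β}
    [DecidableRel G.Adj] [DecidableRel H.Adj] (x : α × β) :
    (G.tensor H).neighborFinset x = G.neighborFinset x.1 ×ˢ H.neighborFinset x.2 := by
  ext
  simp

theorem IsRegularOfDegree.tensor [Fintype α] [Fintype β] {G : SimpleGraph α} {H : SimpleGraph β}
    [DecidableRel G.Adj] [DecidableRel H.Adj] {d₁ d₂ : ℕ} (hG : G.IsRegularOfDegree d₁)
    (hH : H.IsRegularOfDegree d₂) : (G.tensor H).IsRegularOfDegree (d₁ * d₂) := fun x => by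
  rw [← card_neighborFinset_eq_degree, neighborFinset_tensor, Finset.card_product,
    card_neighborFinset_eq_degree, card_neighborFinset_eq_degree, hG x.1, hH x.2]

theorem Colorable.tensor_left {G : SimpleGraph α} {n : ℕ} (hG : G.Colorable n)
    (H : SimpleGraph β) : (G.tensor H).Colorable n :=
  hG.of_hom ⟨Prod.fst, fun h => h.1⟩

theorem Walk.exists_length_eq_of_le {G : SimpleGraph V} (hG : ∀ x, ∃ y, G.Adj x y) {u v : V}
    (p : G.Walk u v) {n : ℕ} (hn : p.length ≤ n) (hpar : n % 2 = p.length % 2) :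
    ∃ q : G.Walk u v, q.length = n := by
  obtain ⟨k, rfl⟩ : ∃ k, n = p.length + 2 * k := ⟨(n - p.length) / 2, by omega⟩
  clear hn hpar
  induction k with
  | zero => exact ⟨p, rfl⟩
  | succ k ih =>
    obtain ⟨q, hq⟩ := ih
    obtain ⟨y, hy⟩ := hG u
    exact ⟨.cons hy (.cons hy.symm q), by simp only [Walk.length_cons, hq]; ring⟩

theorem Connected.exists_walk_length_mod_two {H : SimpleGraph V} (hH : H.Connected)
    (hbip : ¬ H.Colorable 2) (u v : V) (n : ℕ) : ∃ p : H.Walk u v, p.length % 2 = n % 2 := by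
  by_contra! h
  -- otherwise the parity of a walk from `u` depends only on its endpoint, a 2-colouring
  have hpar : ∀ {w} (p q : H.Walk u w), p.length % 2 = q.length % 2 := by
    intro w p q
    obtain ⟨r⟩ := hH.preconnected w v
    have hp := h (p.append r)
    have hq := h (q.append r)
    simp only [Walk.length_append] at hp hq
    omega
  let c : H.Coloring Bool := Coloring.mk (fun w => decide (Even (hH.preconnected u w).some.length))
    fun {w w'} hadj => by
      have := hpar ((hH.preconnected u w).some.concat hadj) (hH.preconnected u w').some
      rw [Walk.length_concat] at this
      simp only [ne_eq, decide_eq_decide, Nat.even_iff]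
      omega
  exact hbip (by simpa using c.colorable)

theorem Walk.reachable_tensor_of_length_eq {G : SimpleGraph α} {H : SimpleGraph β} :
    ∀ {a a' : α} {b b' : β} (p : G.Walk a a') (q : H.Walk b b'), p.length = q.length →
      (G.tensor H).Reachable (a, b) (a', b')
  | _, _, _, _, .nil, .nil, _ => .refl _
  | _, _, _, _, .cons hp p, .cons hq q, h =>
    (Adj.reachable (G := G.tensor H) ⟨hp, hq⟩).trans
      (reachable_tensor_of_length_eq p q (by simpa using h))
  | _, _, _, _, .nil, .cons _ _, h => by simp at h
  | _, _, _, _, .cons _ _, .nil, h => by simp at h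

theorem Connected.tensor {G : SimpleGraph α} {H : SimpleGraph β} (hG : G.Connected)
    (hGadj : ∀ a, ∃ a', G.Adj a a') (hH : H.Connected) (hHbip : ¬ H.Colorable 2) :
    (G.tensor H).Connected := by
  have hHadj : ∀ b, ∃ b', H.Adj b b' := fun b => by
    obtain ⟨p, hp⟩ := hH.exists_walk_length_mod_two hHbip b b 1
    cases p with
    | nil => simp at hp
    | cons h _ => exact ⟨_, h⟩
  have := hG.nonempty
  have := hH.nonempty
  refine ⟨fun ⟨a, b⟩ ⟨a', b'⟩ => ?_⟩
  obtain ⟨p⟩ := hG.preconnected a a'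
  obtain ⟨q, hq⟩ := hH.exists_walk_length_mod_two hHbip b b' p.length
  obtain ⟨p', hp'⟩ := p.exists_length_eq_of_le hGadj (n := max p.length q.length) (by omega)
    (by omega)
  obtain ⟨q', hq'⟩ := q.exists_length_eq_of_le hHadj (n := max p.length q.length) (by omega)
    (by omega)
  exact p'.reachable_tensor_of_length_eq q' (hp'.trans hq'.symm)

end SimpleGraph

theorem stmt_19 {α β : Type*} [Fintype α] [Fintype β]
    (G : SimpleGraph α) (H : SimpleGraph β)
    [DecidableRel G.Adj] [DecidableRel H.Adj] (d₁ d₂ : ℕ)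
    (hGconn : G.Connected) (hGbip : G.Colorable 2)
    (hGreg : G.IsRegularOfDegree d₁) (hd₁ : Odd d₁)
    (hHconn : H.Connected) (hHbip : ¬ H.Colorable 2)
    (hHreg : H.IsRegularOfDegree d₂) (hd₂ : Odd d₂) :
    ¬ (G.tensor H).IsCirculant := by
  rintro ⟨φ, hφ⟩
  have hT : (G.tensor H).Connected :=
    hGconn.tensor (fun a => (G.degree_pos_iff_exists_adj a).mp (hGreg a ▸ hd₁.pos)) hHconn hHbip
  obtain ⟨v⟩ := hT.nonempty
  have htrans : ∀ w, ∃ k : ℤ, (φ ^ k) v = w := fun w => by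
    obtain ⟨k, hk⟩ := hφ v w
    exact ⟨k, by rwa [zpow_natCast, ← RelIso.toEquiv_pow_apply]⟩
  obtain ⟨ψ, hψ, hψ2, hadj⟩ := exists_sq_eq_one_adj_of_odd_degree htrans
    ((hGreg.tensor hHreg v).symm ▸ hd₁.mul hd₂)
  have h4 : 4 ∣ orderOf φ := by
    obtain ⟨p, hp⟩ := hGreg.even_card_of_odd hd₁
    obtain ⟨q, hq⟩ := hHreg.even_card_of_odd hd₂
    rw [← natCard_eq_orderOf htrans, Nat.card_eq_fintype_card, Fintype.card_prod, hp, hq]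
    exact ⟨p * q, by ring⟩
  exact hT.not_adj_apply_of_isSquare (hGbip.tensor_left H)
    (isSquare_of_sq_eq_one_of_mem_zpowers h4 hψ hψ2) v hadj
end
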